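/- Let μ, λ be weights on ℝ and suppose the commutator [b,H] is bounded from L²(μ) to L²(λ). Then sup over intervals I of (1/μ(I)) ∫_I |b(x) − ⟨b⟩_I|² λ(x) dx ≤ C ‖[b,H] : L²(μ) → L²(λ)‖², where C is an absolute constant. If moreover μ ∈ A₂, then also sup over intervals I of (μ⁻¹(I)/|I|²) ∫_I |b(x) − ⟨b⟩_I|² λ(x) dx ≤ C[μ]_{A₂} ‖[b,H] : L²(μ) → L²(λ)‖². -/

import Mathlib

/-!
Test the commutator against `1_Q` and `y ↦ (m - y)/|Q| · 1_Q(y)`, where `m` is the midpoint of an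
interval `Q`. At a point `x` off the closure of `Q` no principal value is involved, and
`b x - ⟨b⟩_Q = (x - m)/|Q| · [b,H]1_Q(x) + [b,H]((m - ·)/|Q| · 1_Q)(x)`,
so on an interval `D` next to `Q` of the same length `∫_D |b - ⟨b⟩_Q|² λ ≤ 5 N² μ(Q)`.

To compare `b` with its own average on `I` without any doubling property of `μ`, telescope along
the dyadic subintervals of `I`: almost everywhere (Lebesgue differentiation kills the tail)
`b x - ⟨b⟩_I = ∑ₖ 2^{-k-1} (b x - sₖ x)`, where `sₖ x` is the average of `b` over the sibling of
the generation-`(k+1)` dyadic interval containing `x`. Pairing every dyadic interval with its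
sibling gives `∫_I |b - sₖ|² λ ≤ 5 N² μ(I)` for each `k`, and as the weights `2^{-k-1}` sum to one,
Cauchy–Schwarz yields `∫_I |b - ⟨b⟩_I|² λ ≤ 5 N² μ(I)`. The `A₂` bound follows from
`μ⁻¹(I)/|I|² ≤ [μ]_{A₂}/μ(I)`.
-/

open MeasureTheory Filter Set
open scoped ENNReal Topology

noncomputable section

/-- A *weight* on ℝ: a locally integrable function that is positive a.e. -/
def IsWeight (w : ℝ → ℝ) : Prop :=
  LocallyIntegrable w volume ∧ ∀ᵐ x : ℝ ∂volume, 0 < w x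

/-- The average `⟨f⟩_I = (1/|I|) ∫_I f` of `f` over the interval `I = (a, c)`. -/
def avgI (f : ℝ → ℝ) (a c : ℝ) : ℝ := (c - a)⁻¹ * ∫ x in Set.Ioo a c, f x

/-- `c` is an upper bound for the `A₂` characteristic
`[w]_{A₂} = sup_I ⟨w⟩_I ⟨w⁻¹⟩_I` of `w` (supremum over all intervals). -/
def IsA2 (w : ℝ → ℝ) (c : ℝ) : Prop :=
  ∀ a b : ℝ, a < b → avgI w a b * avgI (fun x => (w x)⁻¹) a b ≤ c

/-- `c` is an upper bound for the `A_p` characteristic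
`[w]_{A_p} = sup_I ⟨w⟩_I ⟨w^{1-p'}⟩_I^{p-1}` of `w`, where `1 - p' = -1/(p-1)`. -/
def IsAp (w : ℝ → ℝ) (p c : ℝ) : Prop :=
  ∀ a b : ℝ, a < b →
    avgI w a b * (avgI (fun x => (w x) ^ (-(p - 1)⁻¹)) a b) ^ (p - 1) ≤ c

/-- The dyadic interval `[n 2^k, (n+1) 2^k)`. -/
def dyad (k n : ℤ) : Set ℝ := Set.Ico ((n : ℝ) * 2 ^ k) (((n : ℝ) + 1) * 2 ^ k)

/-- The Haar function `h_I = |I|^{-1/2}(-1_{I₋} + 1_{I₊})` of the dyadic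
interval `I = [n 2^k, (n+1) 2^k)`. -/
def haar (k n : ℤ) : ℝ → ℝ := fun x =>
  (Real.sqrt ((2 : ℝ) ^ k))⁻¹ *
    ((dyad (k - 1) (2 * n + 1)).indicator (fun _ => (1 : ℝ)) x -
      (dyad (k - 1) (2 * n)).indicator (fun _ => (1 : ℝ)) x)

/-- The Haar coefficient `f̂(I) = ⟨f, h_I⟩` (inner product in unweighted `L²(ℝ)`). -/
def hatD (f : ℝ → ℝ) (k n : ℤ) : ℝ := ∫ x : ℝ, f x * haar k n x

/-- The average `⟨f⟩_I` of `f` over the dyadic interval `I = [n 2^k, (n+1) 2^k)`. -/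
def avgD (f : ℝ → ℝ) (k n : ℤ) : ℝ := ((2 : ℝ) ^ k)⁻¹ * ∫ x in dyad k n, f x

/-- The function `∑_{I ⊆ K} b̂(I) ⟨σ⁻¹⟩_I h_I` appearing in the Bloom constant,
where `K = [n 2^k, (n+1) 2^k)`. -/
def bloomFn (b σ : ℝ → ℝ) (k n : ℤ) : ℝ → ℝ := fun x =>
  ∑' p : ℤ × ℤ,
    Set.indicator {q : ℤ × ℤ | dyad q.1 q.2 ⊆ dyad k n}
      (fun q => hatD b q.1 q.2 * avgD (fun y => (σ y)⁻¹) q.1 q.2 * haar q.1 q.2 x) p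

/-- The Bloom constant
`𝐁₂[σ,τ] = sup_{K ∈ 𝒟} σ⁻¹(K)^{-1/2} ‖∑_{I ⊆ K} b̂(I) ⟨σ⁻¹⟩_I h_I‖_{L²(τ)}`. -/
def B2 (b σ τ : ℝ → ℝ) : ℝ≥0∞ :=
  ⨆ (k : ℤ) (n : ℤ),
    ((ENNReal.ofReal (∫ x in dyad k n, (σ x)⁻¹))⁻¹ *
        ∫⁻ x : ℝ, ENNReal.ofReal ((bloomFn b σ k n x) ^ 2 * τ x)) ^ ((2 : ℝ)⁻¹)

/-- The weighted BMO norm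
`‖b‖_{BMO_ρ} = sup_I ((1/ρ(I)) ∫_I |b - ⟨b⟩_I|² dx)^{1/2}` over all intervals. -/
def bmoRho (b ρ : ℝ → ℝ) : ℝ≥0∞ :=
  ⨆ (a : ℝ) (c : ℝ) (_ : a < c),
    ((ENNReal.ofReal (∫ x in Set.Ioo a c, ρ x))⁻¹ *
        ∫⁻ x in Set.Ioo a c, ENNReal.ofReal ((b x - avgI b a c) ^ 2)) ^ ((2 : ℝ)⁻¹)

/-- The dyadic weighted BMO norm
`‖b‖_{BMO_ρ} = sup_{I ∈ 𝒟} ((1/ρ(I)) ∫_I |b - ⟨b⟩_I|² dx)^{1/2}`. -/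
def bmoRhoD (b ρ : ℝ → ℝ) : ℝ≥0∞ :=
  ⨆ (k : ℤ) (n : ℤ),
    ((ENNReal.ofReal (∫ x in dyad k n, ρ x))⁻¹ *
        ∫⁻ x in dyad k n, ENNReal.ofReal ((b x - avgD b k n) ^ 2)) ^ ((2 : ℝ)⁻¹)

/-- The Hilbert transform as a principal value:
`Hf(x) = lim_{ε → 0⁺} ∫_{|x-y| > ε} f(y)/(x-y) dy`. -/
def hilbertT (f : ℝ → ℝ) (x : ℝ) : ℝ :=
  limUnder (𝓝[>] (0 : ℝ)) fun ε : ℝ => ∫ y in {y : ℝ | ε < |x - y|}, f y / (x - y)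

/-- The commutator `[b, H] f = b ⬝ Hf - H(bf)`. -/
def commH (b f : ℝ → ℝ) : ℝ → ℝ := fun x =>
  b x * hilbertT f x - hilbertT (fun y => b y * f y) x

/-- Bounded, measurable and compactly supported functions: a dense class of
test functions in the weighted `L^p` spaces. -/
def NiceF (f : ℝ → ℝ) : Prop :=
  Measurable f ∧ HasCompactSupport f ∧ ∃ M : ℝ, ∀ x, |f x| ≤ M

/-- The norm of the commutator `[b,H] : L^p(μ) → L^p(λ)`, computed as a
supremum over the dense class of test functions `NiceF`. -/
def commNormP (b μ lam : ℝ → ℝ) (p : ℝ) : ℝ≥0∞ :=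
  ⨆ (f : ℝ → ℝ) (_ : NiceF f),
    ((∫⁻ x : ℝ, ENNReal.ofReal (|commH b f x| ^ p * lam x)) /
        ∫⁻ x : ℝ, ENNReal.ofReal (|f x| ^ p * μ x)) ^ p⁻¹

/-- The paraproduct `Π_b f = ∑_{I ∈ 𝒟} b̂(I) ⟨f⟩_I h_I`. -/
def paraProd (b f : ℝ → ℝ) : ℝ → ℝ := fun x =>
  ∑' p : ℤ × ℤ, hatD b p.1 p.2 * avgD f p.1 p.2 * haar p.1 p.2 x

/-- The dual paraproduct `Π_b* f = ∑_{I ∈ 𝒟} b̂(I) f̂(I) 1_I / |I|`. -/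
def paraProdStar (b f : ℝ → ℝ) : ℝ → ℝ := fun x =>
  ∑' p : ℤ × ℤ,
    hatD b p.1 p.2 * hatD f p.1 p.2 * ((2 : ℝ) ^ p.1)⁻¹ *
      (dyad p.1 p.2).indicator (fun _ => (1 : ℝ)) x

/-- Petermichl's dyadic shift `Ш`, the linear operator determined by
`Ш h_I = (1/√2)(h_{I₋} - h_{I₊})`, written via the Haar expansion. -/
def shiftD (f : ℝ → ℝ) : ℝ → ℝ := fun x =>
  ∑' p : ℤ × ℤ,
    hatD f p.1 p.2 * ((Real.sqrt 2)⁻¹ *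
      (haar (p.1 - 1) (2 * p.2) x - haar (p.1 - 1) (2 * p.2 + 1) x))

/-- The linear span of the Haar system. -/
def HaarSpan : Submodule ℝ (ℝ → ℝ) :=
  Submodule.span ℝ {g : ℝ → ℝ | ∃ k n : ℤ, g = haar k n}

/-- The `L²(μ) → L²(λ)` operator norm of `T`. -/
def opNorm2 (T : (ℝ → ℝ) → ℝ → ℝ) (μ lam : ℝ → ℝ) : ℝ≥0∞ :=
  ⨆ f : ℝ → ℝ,
    ((∫⁻ x : ℝ, ENNReal.ofReal ((T f x) ^ 2 * lam x)) /
        ∫⁻ x : ℝ, ENNReal.ofReal ((f x) ^ 2 * μ x)) ^ ((2 : ℝ)⁻¹)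

/-- The square function sum `∑_{I ⊆ K} (b̂(I)²/|I|) 1_I(x)`,
where `K = [n 2^k, (n+1) 2^k)`. -/
def sqSum (b : ℝ → ℝ) (k n : ℤ) (x : ℝ) : ℝ≥0∞ :=
  ∑' p : ℤ × ℤ,
    Set.indicator {q : ℤ × ℤ | dyad q.1 q.2 ⊆ dyad k n}
      (fun q => ENNReal.ofReal ((hatD b q.1 q.2) ^ 2 * ((2 : ℝ) ^ q.1)⁻¹) *
        (dyad q.1 q.2).indicator (fun _ => (1 : ℝ≥0∞)) x) p

def CommHBound (b μ lam : ℝ → ℝ) (N : ℝ) : Prop :=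
  ∀ f : ℝ → ℝ, NiceF f →
    (∫⁻ x : ℝ, ENNReal.ofReal ((commH b f x) ^ 2 * lam x)) ≤
      ENNReal.ofReal (N ^ 2) * ∫⁻ x : ℝ, ENNReal.ofReal ((f x) ^ 2 * μ x)

section OffSupport

variable {q₁ q₂ x : ℝ}

theorem hilbertT_eq_setIntegral_of_notMem {g : ℝ → ℝ} (hg : ∀ y ∉ Ioo q₁ q₂, g y = 0)
    (hx : x ∉ Icc q₁ q₂) :
    hilbertT g x = ∫ y in Ioo q₁ q₂, g y / (x - y) := by
  set δ := max (q₁ - x) (x - q₂)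
  have hδ : 0 < δ := by
    simp only [mem_Icc, not_and_or, not_le] at hx
    rcases hx with h | h
    · exact lt_max_of_lt_left (by linarith)
    · exact lt_max_of_lt_right (by linarith)
  have hsep : ∀ y ∈ Ioo q₁ q₂, δ ≤ |x - y| := fun y hy =>
    max_le (by linarith [neg_abs_le (x - y), hy.1]) (by linarith [le_abs_self (x - y), hy.2])
  have htrunc : ∀ ε ∈ Ioo 0 δ,
      ∫ y in {y | ε < |x - y|}, g y / (x - y) = ∫ y in Ioo q₁ q₂, g y / (x - y) := by
    intro ε hε
    refine setIntegral_eq_of_subset_of_forall_sdiff_eq_zero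
      (measurableSet_lt measurable_const (by fun_prop)) (fun y hy => ?_) fun y hy => ?_
    · exact hε.2.trans_le (hsep y hy)
    · rw [hg y hy.2, zero_div]
  refine Tendsto.limUnder_eq (tendsto_const_nhds.congr' ?_)
  filter_upwards [Ioo_mem_nhdsGT hδ] with ε hε using (htrunc ε hε).symm

theorem commH_indicator_eq (b ψ : ℝ → ℝ) (hx : x ∉ Icc q₁ q₂) :
    commH b ((Ioo q₁ q₂).indicator ψ) x =
      b x * (∫ y in Ioo q₁ q₂, ψ y / (x - y)) - ∫ y in Ioo q₁ q₂, b y * ψ y / (x - y) := by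
  rw [commH, hilbertT_eq_setIntegral_of_notMem (fun y hy => indicator_of_notMem hy ψ) hx,
    hilbertT_eq_setIntegral_of_notMem (fun y hy => by simp [indicator_of_notMem hy]) hx]
  refine congr_arg₂ (· - ·) (congr_arg (b x * ·) ?_) ?_ <;>
    exact setIntegral_congr_fun measurableSet_Ioo fun y hy => by rw [indicator_of_mem hy]

theorem integrableOn_mul_div_sub {φ ψ : ℝ → ℝ} (hφ : IntegrableOn φ (Ioo q₁ q₂))
    (hψ : ContinuousOn ψ (Icc q₁ q₂)) (hx : x ∉ Icc q₁ q₂) :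
    IntegrableOn (fun y => φ y * (ψ y / (x - y))) (Ioo q₁ q₂) :=
  hφ.mul_continuousOn_of_subset
    (hψ.div (by fun_prop) fun y hy => sub_ne_zero.2 fun h => hx (h ▸ hy))
    measurableSet_Ioo isCompact_Icc Ioo_subset_Icc_self

theorem commH_indicator_eq_setIntegral {b ψ : ℝ → ℝ} (hb : IntegrableOn b (Ioo q₁ q₂))
    (hψ : ContinuousOn ψ (Icc q₁ q₂)) (hx : x ∉ Icc q₁ q₂) :
    commH b ((Ioo q₁ q₂).indicator ψ) x = ∫ y in Ioo q₁ q₂, (b x - b y) * (ψ y / (x - y)) := by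
  have h1 : IntegrableOn (fun y => 1 * (ψ y / (x - y))) (Ioo q₁ q₂) :=
    integrableOn_mul_div_sub (integrableOn_const measure_Ioo_lt_top.ne) hψ hx
  simp only [one_mul] at h1
  simp only [sub_mul]
  rw [integral_sub (h1.const_mul _) (integrableOn_mul_div_sub hb hψ hx), integral_const_mul,
    commH_indicator_eq b ψ hx]
  simp only [mul_div_assoc]

theorem sub_avgI_eq_commH {b : ℝ → ℝ} (hb : IntegrableOn b (Ioo q₁ q₂)) (hq : q₁ < q₂)
    (hx : x ∉ Icc q₁ q₂) :
    b x - avgI b q₁ q₂ =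
      (x - (q₁ + q₂) / 2) / (q₂ - q₁) * commH b ((Ioo q₁ q₂).indicator fun _ => 1) x +
        commH b ((Ioo q₁ q₂).indicator fun y => ((q₁ + q₂) / 2 - y) / (q₂ - q₁)) x := by
  have hh : q₂ - q₁ ≠ 0 := (sub_pos.2 hq).ne'
  have hbx : IntegrableOn (fun y => b x - b y) (Ioo q₁ q₂) :=
    (integrableOn_const measure_Ioo_lt_top.ne).sub hb
  have hpt : ∀ y ∈ Ioo q₁ q₂,
      (x - (q₁ + q₂) / 2) / (q₂ - q₁) * ((b x - b y) * (1 / (x - y))) +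
        (b x - b y) * (((q₁ + q₂) / 2 - y) / (q₂ - q₁) / (x - y)) = (b x - b y) / (q₂ - q₁) := by
    intro y hy
    have : x - y ≠ 0 := sub_ne_zero.2 fun h => hx (h ▸ Ioo_subset_Icc_self hy)
    field_simp
    ring
  rw [commH_indicator_eq_setIntegral hb continuousOn_const hx,
    commH_indicator_eq_setIntegral hb (by fun_prop) hx, ← integral_const_mul,
    ← integral_add ((integrableOn_mul_div_sub hbx continuousOn_const hx).const_mul _)
      (integrableOn_mul_div_sub hbx (by fun_prop) hx),
    setIntegral_congr_fun measurableSet_Ioo hpt, integral_div, integral_sub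
      (integrableOn_const (C := b x) measure_Ioo_lt_top.ne) hb, setIntegral_const,
    Real.volume_real_Ioo_of_le hq.le, avgI, smul_eq_mul]
  field_simp

end OffSupport

section NearbyInterval

variable {q₁ q₂ : ℝ}

theorem aestronglyMeasurable_setIntegral_div_sub {g : ℝ → ℝ} {s : Set ℝ}
    (hg : AEStronglyMeasurable g (volume.restrict s)) :
    AEStronglyMeasurable (fun x => ∫ y in s, g y / (x - y)) volume :=
  AEStronglyMeasurable.integral_prod_right' (f := fun p : ℝ × ℝ => g p.2 / (p.1 - p.2))
    (hg.comp_snd.div₀ (continuous_fst.sub continuous_snd).aestronglyMeasurable)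

theorem aemeasurable_commH_indicator {b ψ : ℝ → ℝ} (hb : AEStronglyMeasurable b volume)
    (hψ : AEStronglyMeasurable ψ volume) {D : Set ℝ} (hD : MeasurableSet D)
    (hDQ : ∀ x ∈ D, x ∉ Icc q₁ q₂) :
    AEMeasurable (commH b ((Ioo q₁ q₂).indicator ψ)) (volume.restrict D) := by
  refine AEMeasurable.congr (f := fun x => b x * (∫ y in Ioo q₁ q₂, ψ y / (x - y)) -
    ∫ y in Ioo q₁ q₂, b y * ψ y / (x - y)) ?_ ?_
  · exact ((hb.mul (aestronglyMeasurable_setIntegral_div_sub hψ.restrict)).sub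
      (aestronglyMeasurable_setIntegral_div_sub (hb.mul hψ).restrict)).aemeasurable.restrict
  · filter_upwards [ae_restrict_mem hD] with x hx using (commH_indicator_eq b ψ (hDQ x hx)).symm

theorem niceF_indicator_Ioo {ψ : ℝ → ℝ} (hψ : Continuous ψ) :
    NiceF ((Ioo q₁ q₂).indicator ψ) := by
  obtain ⟨M, hM⟩ := (isCompact_Icc (a := q₁) (b := q₂)).exists_bound_of_continuousOn hψ.continuousOn
  refine ⟨hψ.measurable.indicator measurableSet_Ioo, HasCompactSupport.intro isCompact_Icc
    fun y hy => indicator_of_notMem (fun h => hy (Ioo_subset_Icc_self h)) ψ, max M 0, fun y => ?_⟩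
  by_cases hy : y ∈ Ioo q₁ q₂
  · rw [indicator_of_mem hy]
    exact le_max_of_le_left (hM y (Ioo_subset_Icc_self hy))
  · simp [indicator_of_notMem hy]

theorem lintegral_sq_indicator_mul_le (μ : ℝ → ℝ) {ψ : ℝ → ℝ} {M : ℝ}
    (hψ : ∀ y ∈ Ioo q₁ q₂, ψ y ^ 2 ≤ M) :
    ∫⁻ x, ENNReal.ofReal ((Ioo q₁ q₂).indicator ψ x ^ 2 * μ x) ≤
      ENNReal.ofReal M * ∫⁻ y in Ioo q₁ q₂, ENNReal.ofReal (μ y) := by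
  rw [← setLIntegral_eq_of_support_subset (s := Ioo q₁ q₂),
    ← lintegral_const_mul' _ _ ENNReal.ofReal_ne_top]
  · refine setLIntegral_mono' measurableSet_Ioo fun y hy => ?_
    rw [indicator_of_mem hy, ENNReal.ofReal_mul (sq_nonneg _)]
    gcongr
    exact hψ y hy
  · intro y hy
    by_contra h
    simp [indicator_of_notMem h] at hy

theorem ofReal_sq_sub_avgI_mul_le {b : ℝ → ℝ} (hb : IntegrableOn b (Ioo q₁ q₂)) (hq : q₁ < q₂)
    {x : ℝ} (hx : x ∉ Icc q₁ q₂) (hnear : |x - (q₁ + q₂) / 2| ≤ 3 / 2 * (q₂ - q₁)) (l : ℝ) :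
    ENNReal.ofReal ((b x - avgI b q₁ q₂) ^ 2 * l) ≤
      ENNReal.ofReal (9 / 2) *
          ENNReal.ofReal (commH b ((Ioo q₁ q₂).indicator fun _ => 1) x ^ 2 * l) +
        ENNReal.ofReal 2 * ENNReal.ofReal
          (commH b ((Ioo q₁ q₂).indicator fun y => ((q₁ + q₂) / 2 - y) / (q₂ - q₁)) x ^ 2 * l) := by
  rw [sub_avgI_eq_commH hb hq hx]
  set F₁ := commH b ((Ioo q₁ q₂).indicator fun _ => 1) x
  set F₂ := commH b ((Ioo q₁ q₂).indicator fun y => ((q₁ + q₂) / 2 - y) / (q₂ - q₁)) x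
  set t := (x - (q₁ + q₂) / 2) / (q₂ - q₁)
  have ht : t ^ 2 ≤ (3 / 2) ^ 2 := by
    have hh : 0 < q₂ - q₁ := sub_pos.2 hq
    rw [sq_le_sq, abs_div, abs_of_pos hh, div_le_iff₀ hh,
      abs_of_pos (by norm_num : (0 : ℝ) < 3 / 2)]
    exact hnear
  calc ENNReal.ofReal ((t * F₁ + F₂) ^ 2 * l)
      = ENNReal.ofReal ((t * F₁ + F₂) ^ 2) * ENNReal.ofReal l := ENNReal.ofReal_mul (sq_nonneg _)
    _ ≤ ENNReal.ofReal (9 / 2 * F₁ ^ 2 + 2 * F₂ ^ 2) * ENNReal.ofReal l := by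
        gcongr
        nlinarith [sq_nonneg (t * F₁ - F₂), mul_le_mul_of_nonneg_right ht (sq_nonneg F₁)]
    _ = _ := by
        rw [ENNReal.ofReal_add (by positivity) (by positivity), add_mul,
          ENNReal.ofReal_mul (by norm_num), ENNReal.ofReal_mul (by norm_num),
          ENNReal.ofReal_mul (sq_nonneg F₁), ENNReal.ofReal_mul (sq_nonneg F₂)]
        ring

theorem lintegral_sq_sub_avgI_le_of_near {b μ lam : ℝ → ℝ} {N : ℝ} (hcomm : CommHBound b μ lam N)
    (hb : LocallyIntegrable b volume) (hlam : AEMeasurable lam volume) (hq : q₁ < q₂)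
    {D : Set ℝ} (hD : MeasurableSet D) (hDQ : ∀ x ∈ D, x ∉ Icc q₁ q₂)
    (hnear : ∀ x ∈ D, |x - (q₁ + q₂) / 2| ≤ 3 / 2 * (q₂ - q₁)) :
    ∫⁻ x in D, ENNReal.ofReal ((b x - avgI b q₁ q₂) ^ 2 * lam x) ≤
      ENNReal.ofReal (5 * N ^ 2) * ∫⁻ y in Ioo q₁ q₂, ENNReal.ofReal (μ y) := by
  set f₁ := (Ioo q₁ q₂).indicator fun _ => (1 : ℝ)
  set f₂ := (Ioo q₁ q₂).indicator fun y => ((q₁ + q₂) / 2 - y) / (q₂ - q₁)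
  set W := ∫⁻ y in Ioo q₁ q₂, ENNReal.ofReal (μ y)
  set Φ : (ℝ → ℝ) → ℝ → ℝ≥0∞ := fun f x => ENNReal.ofReal (commH b f x ^ 2 * lam x)
  have hΦ₁ : AEMeasurable (Φ f₁) (volume.restrict D) := by
    have := aemeasurable_commH_indicator (ψ := fun _ => 1) hb.aestronglyMeasurable
      aestronglyMeasurable_const hD hDQ
    fun_prop
  have hΦ : ∀ f M, NiceF f → ∫⁻ x, ENNReal.ofReal (f x ^ 2 * μ x) ≤ ENNReal.ofReal M * W →
      ∫⁻ x in D, Φ f x ≤ ENNReal.ofReal (N ^ 2 * M) * W := fun f M hf hfM =>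
    (setLIntegral_le_lintegral _ _).trans <| (hcomm f hf).trans <| by
      rw [ENNReal.ofReal_mul (sq_nonneg N), mul_assoc]
      gcongr
  have hf₁ : ∫⁻ x in D, Φ f₁ x ≤ ENNReal.ofReal (N ^ 2 * 1) * W :=
    hΦ f₁ 1 (niceF_indicator_Ioo continuous_const)
      (lintegral_sq_indicator_mul_le μ fun y _ => by norm_num)
  have hf₂ : ∫⁻ x in D, Φ f₂ x ≤ ENNReal.ofReal (N ^ 2 * (1 / 4)) * W := by
    refine hΦ f₂ _ (niceF_indicator_Ioo (by fun_prop))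
      (lintegral_sq_indicator_mul_le μ fun y hy => ?_)
    rw [div_pow, div_le_iff₀ (pow_pos (sub_pos.2 hq) 2)]
    nlinarith [mul_pos (sub_pos.2 hy.1) (sub_pos.2 hy.2)]
  calc ∫⁻ x in D, ENNReal.ofReal ((b x - avgI b q₁ q₂) ^ 2 * lam x)
      ≤ ∫⁻ x in D, (ENNReal.ofReal (9 / 2) * Φ f₁ x + ENNReal.ofReal 2 * Φ f₂ x) :=
        setLIntegral_mono' hD fun x hx => ofReal_sq_sub_avgI_mul_le
          (hb.integrableOn_isCompact isCompact_Icc |>.mono_set Ioo_subset_Icc_self) hq (hDQ x hx)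
          (hnear x hx) _
    _ = ENNReal.ofReal (9 / 2) * (∫⁻ x in D, Φ f₁ x) + ENNReal.ofReal 2 * ∫⁻ x in D, Φ f₂ x := by
        rw [lintegral_add_left' (hΦ₁.const_mul _)]
        congr 1 <;> exact lintegral_const_mul' _ _ ENNReal.ofReal_ne_top
    _ ≤ ENNReal.ofReal (9 / 2) * (ENNReal.ofReal (N ^ 2 * 1) * W) +
          ENNReal.ofReal 2 * (ENNReal.ofReal (N ^ 2 * (1 / 4)) * W) := by
        gcongr
    _ = ENNReal.ofReal (5 * N ^ 2) * W := by
        rw [← mul_assoc, ← mul_assoc, ← ENNReal.ofReal_mul (by norm_num),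
          ← ENNReal.ofReal_mul (by norm_num), ← add_mul,
          ← ENNReal.ofReal_add (by positivity) (by positivity)]
        ring_nf

end NearbyInterval

/- `dyadicAvg b k a c x` is the average of `b` over the generation-`k` dyadic subinterval of
`(a, c)` containing `x`, and `siblingAvg b k a c x` the average over the sibling of the
generation-`(k + 1)` one. -/
def dyadicAvg (b : ℝ → ℝ) : ℕ → ℝ → ℝ → ℝ → ℝ
  | 0, a, c, _ => avgI b a c
  | k + 1, a, c, x =>
    if x < (a + c) / 2 then dyadicAvg b k a ((a + c) / 2) x else dyadicAvg b k ((a + c) / 2) c x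

def siblingAvg (b : ℝ → ℝ) : ℕ → ℝ → ℝ → ℝ → ℝ
  | 0, a, c, x => if x < (a + c) / 2 then avgI b ((a + c) / 2) c else avgI b a ((a + c) / 2)
  | k + 1, a, c, x =>
    if x < (a + c) / 2 then siblingAvg b k a ((a + c) / 2) x else siblingAvg b k ((a + c) / 2) c x

section Dyadic

variable {b : ℝ → ℝ}

theorem avgI_eq_avg_halves (hb : LocallyIntegrable b volume) {a c : ℝ} (hac : a < c) :
    avgI b a c = (avgI b a ((a + c) / 2) + avgI b ((a + c) / 2) c) / 2 := by
  have hIoo : ∀ {u v : ℝ}, u ≤ v → ∫ y in Ioo u v, b y = ∫ y in u..v, b y := fun h => by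
    rw [intervalIntegral.integral_of_le h, integral_Ioc_eq_integral_Ioo]
  have hint : ∀ u v, IntervalIntegrable b volume u v := fun u v =>
    (hb.integrableOn_isCompact isCompact_uIcc).intervalIntegrable
  rw [avgI, avgI, avgI, hIoo hac.le, hIoo (by linarith), hIoo (by linarith),
    ← intervalIntegral.integral_add_adjacent_intervals (hint a ((a + c) / 2)) (hint _ c)]
  rw [show (a + c) / 2 - a = (c - a) / 2 by ring, show c - (a + c) / 2 = (c - a) / 2 by ring,
    inv_div]
  ring

theorem dyadicAvg_eq_avg_succ_siblingAvg (hb : LocallyIntegrable b volume) (k : ℕ) {a c : ℝ}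
    (hac : a < c) (x : ℝ) :
    dyadicAvg b k a c x = (dyadicAvg b (k + 1) a c x + siblingAvg b k a c x) / 2 := by
  induction k generalizing a c with
  | zero =>
    simp only [dyadicAvg, siblingAvg]
    rw [avgI_eq_avg_halves hb hac]
    split_ifs <;> ring
  | succ k ih =>
    rw [dyadicAvg, dyadicAvg, siblingAvg]
    split_ifs <;> exact ih (by linarith)

theorem sub_avgI_eq_sum_siblingAvg (hb : LocallyIntegrable b volume) {a c : ℝ} (hac : a < c)
    (x : ℝ) (K : ℕ) :
    b x - avgI b a c = ∑ k ∈ Finset.range K, (2⁻¹ : ℝ) ^ (k + 1) * (b x - siblingAvg b k a c x) +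
      (2⁻¹ : ℝ) ^ K * (b x - dyadicAvg b K a c x) := by
  induction K with
  | zero => simp [dyadicAvg]
  | succ K ih =>
    rw [ih, Finset.sum_range_succ, dyadicAvg_eq_avg_succ_siblingAvg hb K hac x]
    ring

theorem measurable_siblingAvg (b : ℝ → ℝ) (k : ℕ) (a c : ℝ) : Measurable (siblingAvg b k a c) := by
  induction k generalizing a c with
  | zero => exact Measurable.ite measurableSet_Iio measurable_const measurable_const
  | succ k ih => exact Measurable.ite measurableSet_Iio (ih _ _) (ih _ _)

theorem exists_dyadicAvg_eq_avgI (b : ℝ → ℝ) (K : ℕ) {a c x : ℝ} (hx : x ∈ Icc a c) :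
    ∃ α β, x ∈ Icc α β ∧ β - α = (c - a) / 2 ^ K ∧ dyadicAvg b K a c x = avgI b α β := by
  induction K generalizing a c with
  | zero => exact ⟨a, c, hx, by simp, rfl⟩
  | succ K ih =>
    rw [dyadicAvg]
    split_ifs with h
    · obtain ⟨α, β, hxαβ, hlen, heq⟩ := ih (c := (a + c) / 2) ⟨hx.1, h.le⟩
      exact ⟨α, β, hxαβ, by rw [hlen, pow_succ]; ring, heq⟩
    · obtain ⟨α, β, hxαβ, hlen, heq⟩ := ih (a := (a + c) / 2) ⟨not_lt.1 h, hx.2⟩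
      exact ⟨α, β, hxαβ, by rw [hlen, pow_succ]; ring, heq⟩

theorem avgI_eq_setAverage_closedBall (b : ℝ → ℝ) {α β : ℝ} (h : α < β) :
    avgI b α β = ⨍ y in Metric.closedBall ((α + β) / 2) ((β - α) / 2), b y := by
  rw [← Real.Icc_eq_closedBall, setAverage_eq, integral_Icc_eq_integral_Ioo,
    Real.volume_real_Icc_of_le h.le, smul_eq_mul, avgI]

theorem ae_tendsto_dyadicAvg {a c : ℝ} (hb : LocallyIntegrable b volume) (hac : a < c) :
    ∀ᵐ x, x ∈ Icc a c → Tendsto (fun K => dyadicAvg b K a c x) atTop (𝓝 (b x)) := by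
  filter_upwards [IsUnifLocDoublingMeasure.ae_tendsto_average (μ := volume) hb 1] with x hx hxI
  choose α β hxαβ hlen heq using fun K => exists_dyadicAvg_eq_avgI b K hxI
  have hlt : ∀ K, α K < β K := fun K => sub_pos.1 (hlen K ▸ div_pos (sub_pos.2 hac) (by positivity))
  have hδ : Tendsto (fun K => (β K - α K) / 2) atTop (𝓝[>] 0) := by
    refine tendsto_nhdsWithin_iff.2 ⟨?_, Eventually.of_forall fun K => half_pos (sub_pos.2 (hlt K))⟩
    simp only [hlen]
    simpa using (tendsto_const_nhds.div_atTop
      (tendsto_pow_atTop_atTop_of_one_lt (one_lt_two (α := ℝ)))).div_const 2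
  refine (hx (fun K => (α K + β K) / 2) _ hδ (Eventually.of_forall fun K => ?_)).congr fun K => ?_
  · rw [one_mul, ← Real.Icc_eq_closedBall]
    exact hxαβ K
  · rw [heq, avgI_eq_setAverage_closedBall b (hlt K)]

theorem ae_tendsto_sum_siblingAvg {a c : ℝ} (hb : LocallyIntegrable b volume) (hac : a < c) :
    ∀ᵐ x, x ∈ Icc a c → Tendsto
      (fun K => ∑ k ∈ Finset.range K, (2⁻¹ : ℝ) ^ (k + 1) * (b x - siblingAvg b k a c x))
      atTop (𝓝 (b x - avgI b a c)) := by
  filter_upwards [ae_tendsto_dyadicAvg hb hac] with x hx hxI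
  have htail : Tendsto (fun K => (2⁻¹ : ℝ) ^ K * (b x - dyadicAvg b K a c x)) atTop (𝓝 0) := by
    simpa using (tendsto_pow_atTop_nhds_zero_of_lt_one (r := (2⁻¹ : ℝ)) (by norm_num)
      (by norm_num)).mul (tendsto_const_nhds.sub (hx hxI))
  have h := (tendsto_const_nhds (x := b x - avgI b a c)).sub htail
  rw [sub_zero] at h
  exact h.congr fun K => by rw [sub_avgI_eq_sum_siblingAvg hb hac x K]; ring

end Dyadic

theorem ofReal_sq_le_tsum_of_tendsto {w u : ℕ → ℝ} {L : ℝ} (hw : ∀ k, 0 ≤ w k)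
    (hw₁ : ∀ K, ∑ k ∈ Finset.range K, w k ≤ 1)
    (hL : Tendsto (fun K => ∑ k ∈ Finset.range K, w k * u k) atTop (𝓝 L)) :
    ENNReal.ofReal (L ^ 2) ≤ ∑' k, ENNReal.ofReal (w k) * ENNReal.ofReal (u k ^ 2) := by
  refine le_of_tendsto' ((ENNReal.continuous_ofReal.tendsto _).comp (hL.pow 2)) fun K => ?_
  have hcs : (∑ k ∈ Finset.range K, w k * u k) ^ 2 ≤ ∑ k ∈ Finset.range K, w k * u k ^ 2 := by
    have hnn : 0 ≤ ∑ k ∈ Finset.range K, w k * u k ^ 2 :=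
      Finset.sum_nonneg fun k _ => mul_nonneg (hw k) (sq_nonneg _)
    refine (Finset.sum_sq_le_sum_mul_sum_of_sq_le_mul (g := fun k => w k * u k ^ 2) _
      (fun k _ => hw k) (fun k _ => mul_nonneg (hw k) (sq_nonneg _))
      fun k _ => le_of_eq (by ring)).trans ?_
    nlinarith [hw₁ K]
  calc ENNReal.ofReal ((∑ k ∈ Finset.range K, w k * u k) ^ 2)
      ≤ ENNReal.ofReal (∑ k ∈ Finset.range K, w k * u k ^ 2) := ENNReal.ofReal_le_ofReal hcs
    _ = ∑ k ∈ Finset.range K, ENNReal.ofReal (w k) * ENNReal.ofReal (u k ^ 2) := by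
        rw [ENNReal.ofReal_sum_of_nonneg fun k _ => mul_nonneg (hw k) (sq_nonneg _)]
        exact Finset.sum_congr rfl fun k _ => ENNReal.ofReal_mul (hw k)
    _ ≤ _ := ENNReal.sum_le_tsum _

theorem setLIntegral_Ioo_eq_add {a m c : ℝ} (ham : a ≤ m) (hmc : m < c) (f : ℝ → ℝ≥0∞) :
    ∫⁻ x in Ioo a c, f x = (∫⁻ x in Ioo a m, f x) + ∫⁻ x in Ioo m c, f x := by
  rw [← Ioc_union_Ioo_eq_Ioo ham hmc,
    lintegral_union measurableSet_Ioo (Ioc_disjoint_Ioi_same.mono_right Ioo_subset_Ioi_self),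
    setLIntegral_congr Ioo_ae_eq_Ioc.symm]

theorem setLIntegral_Ioo_ite {a m c : ℝ} (ham : a ≤ m) (hmc : m < c) (F : ℝ → ℝ → ℝ≥0∞)
    (u v : ℝ → ℝ) :
    ∫⁻ x in Ioo a c, F x (if x < m then u x else v x) =
      (∫⁻ x in Ioo a m, F x (u x)) + ∫⁻ x in Ioo m c, F x (v x) := by
  rw [setLIntegral_Ioo_eq_add ham hmc]
  congr 1 <;> refine setLIntegral_congr_fun measurableSet_Ioo fun x hx => ?_
  · rw [if_pos hx.2]
  · rw [if_neg (not_lt.2 hx.1.le)]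

section Estimates

variable {b μ lam : ℝ → ℝ} {N : ℝ}

theorem lintegral_sq_sub_siblingAvg_le (hcomm : CommHBound b μ lam N)
    (hb : LocallyIntegrable b volume) (hlam : AEMeasurable lam volume) (k : ℕ) {a c : ℝ}
    (hac : a < c) :
    ∫⁻ x in Ioo a c, ENNReal.ofReal ((b x - siblingAvg b k a c x) ^ 2 * lam x) ≤
      ENNReal.ofReal (5 * N ^ 2) * ∫⁻ y in Ioo a c, ENNReal.ofReal (μ y) := by
  set F : ℝ → ℝ → ℝ≥0∞ := fun x t => ENNReal.ofReal ((b x - t) ^ 2 * lam x)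
  induction k generalizing a c with
  | zero =>
    have ham : a < (a + c) / 2 := by linarith
    have hmc : (a + c) / 2 < c := by linarith
    refine (setLIntegral_Ioo_ite ham.le hmc F _ _).trans_le ?_
    rw [setLIntegral_Ioo_eq_add ham.le hmc fun y => ENNReal.ofReal (μ y), mul_add]
    refine (add_le_add ?_ ?_).trans_eq (add_comm _ _)
    · refine lintegral_sq_sub_avgI_le_of_near hcomm hb hlam hmc measurableSet_Ioo
        (fun x hx h => (not_le.2 hx.2) h.1) fun x hx => abs_le.2 ⟨?_, ?_⟩ <;> linarith [hx.1, hx.2]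
    · refine lintegral_sq_sub_avgI_le_of_near hcomm hb hlam ham measurableSet_Ioo
        (fun x hx h => (not_le.2 hx.1) h.2) fun x hx => abs_le.2 ⟨?_, ?_⟩ <;> linarith [hx.1, hx.2]
  | succ k ih =>
    have ham : a < (a + c) / 2 := by linarith
    have hmc : (a + c) / 2 < c := by linarith
    refine (setLIntegral_Ioo_ite ham.le hmc F _ _).trans_le ?_
    rw [setLIntegral_Ioo_eq_add ham.le hmc fun y => ENNReal.ofReal (μ y), mul_add]
    exact add_le_add (ih ham) (ih hmc)

theorem lintegral_sq_sub_avgI_le (hcomm : CommHBound b μ lam N)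
    (hb : LocallyIntegrable b volume) (hlam : AEMeasurable lam volume) {a c : ℝ} (hac : a < c) :
    ∫⁻ x in Ioo a c, ENNReal.ofReal ((b x - avgI b a c) ^ 2 * lam x) ≤
      ENNReal.ofReal (5 * N ^ 2) * ∫⁻ y in Ioo a c, ENNReal.ofReal (μ y) := by
  set w : ℕ → ℝ := fun k => (2⁻¹ : ℝ) ^ (k + 1)
  set G : ℕ → ℝ → ℝ≥0∞ := fun k x => ENNReal.ofReal ((b x - siblingAvg b k a c x) ^ 2 * lam x)
  have hw₁ : ∀ K, ∑ k ∈ Finset.range K, w k ≤ 1 := fun K => by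
    have h : ∑ k ∈ Finset.range K, w k = 2⁻¹ * ∑ k ∈ Finset.range K, (1 / 2 : ℝ) ^ k := by
      rw [Finset.mul_sum]
      exact Finset.sum_congr rfl fun k _ => by simp [w, pow_succ, mul_comm]
    linarith [sum_geometric_two_le K]
  have hw : ∑' k, ENNReal.ofReal (w k) = 1 := by
    simp only [w, ENNReal.ofReal_pow (by norm_num : (0 : ℝ) ≤ 2⁻¹),
      ENNReal.ofReal_inv_of_pos (by norm_num : (0 : ℝ) < 2), ENNReal.ofReal_ofNat,
      ENNReal.tsum_geometric_add_one, ENNReal.one_sub_inv_two, inv_inv]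
    exact ENNReal.inv_mul_cancel two_ne_zero ENNReal.ofNat_ne_top
  have hpt : ∀ᵐ x ∂volume.restrict (Ioo a c),
      ENNReal.ofReal ((b x - avgI b a c) ^ 2 * lam x) ≤ ∑' k, ENNReal.ofReal (w k) * G k x := by
    filter_upwards [ae_restrict_of_ae (ae_tendsto_sum_siblingAvg hb hac),
      ae_restrict_mem measurableSet_Ioo] with x hx hxI
    calc ENNReal.ofReal ((b x - avgI b a c) ^ 2 * lam x)
        = ENNReal.ofReal ((b x - avgI b a c) ^ 2) * ENNReal.ofReal (lam x) :=
          ENNReal.ofReal_mul (sq_nonneg _)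
      _ ≤ (∑' k, ENNReal.ofReal (w k) * ENNReal.ofReal ((b x - siblingAvg b k a c x) ^ 2)) *
            ENNReal.ofReal (lam x) := by
          gcongr
          exact ofReal_sq_le_tsum_of_tendsto (fun k => by positivity) hw₁
            (hx (Ioo_subset_Icc_self hxI))
      _ = ∑' k, ENNReal.ofReal (w k) * G k x := by
          rw [← ENNReal.tsum_mul_right]
          refine tsum_congr fun k => ?_
          rw [mul_assoc, ← ENNReal.ofReal_mul (sq_nonneg _)]
  have hG : ∀ k, AEMeasurable (G k) (volume.restrict (Ioo a c)) := fun k => by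
    have := (measurable_siblingAvg b k a c).aemeasurable (μ := volume)
    have := hb.aestronglyMeasurable.aemeasurable
    fun_prop
  calc ∫⁻ x in Ioo a c, ENNReal.ofReal ((b x - avgI b a c) ^ 2 * lam x)
      ≤ ∫⁻ x in Ioo a c, ∑' k, ENNReal.ofReal (w k) * G k x := lintegral_mono_ae hpt
    _ = ∑' k, ENNReal.ofReal (w k) * ∫⁻ x in Ioo a c, G k x := by
        rw [lintegral_tsum fun k => (hG k).const_mul _]
        exact tsum_congr fun k => lintegral_const_mul' _ _ ENNReal.ofReal_ne_top
    _ ≤ ∑' k, ENNReal.ofReal (w k) *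
          (ENNReal.ofReal (5 * N ^ 2) * ∫⁻ y in Ioo a c, ENNReal.ofReal (μ y)) :=
        ENNReal.tsum_le_tsum fun k =>
          mul_le_mul_right (lintegral_sq_sub_siblingAvg_le hcomm hb hlam k hac) _
    _ = ENNReal.ofReal (5 * N ^ 2) * ∫⁻ y in Ioo a c, ENNReal.ofReal (μ y) := by
        rw [ENNReal.tsum_mul_right, hw, one_mul]

end Estimates

theorem ofReal_div_sq_mul_le_of_isA2 {μ : ℝ → ℝ} {cmu : ℝ} (hA₂ : IsA2 μ cmu) {a c : ℝ}
    (hac : a < c) (hμ : 0 ≤ ∫ x in Ioo a c, μ x) {C : ℝ} (hC : 0 ≤ C) {X : ℝ≥0∞}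
    (hX : X ≤ ENNReal.ofReal C * ENNReal.ofReal (∫ x in Ioo a c, μ x)) :
    ENNReal.ofReal ((∫ x in Ioo a c, (μ x)⁻¹) / (c - a) ^ 2) * X ≤ ENNReal.ofReal (C * cmu) := by
  set W := ∫ x in Ioo a c, μ x
  set V := ∫ x in Ioo a c, (μ x)⁻¹
  have hA : (c - a)⁻¹ * W * ((c - a)⁻¹ * V) ≤ cmu := hA₂ a c hac
  calc ENNReal.ofReal (V / (c - a) ^ 2) * X
      ≤ ENNReal.ofReal (V / (c - a) ^ 2) * (ENNReal.ofReal C * ENNReal.ofReal W) := by gcongr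
    _ = ENNReal.ofReal (C * ((c - a)⁻¹ * W * ((c - a)⁻¹ * V))) := by
        rw [← ENNReal.ofReal_mul hC, ← ENNReal.ofReal_mul' (by positivity), div_eq_mul_inv,
          ← inv_pow]
        ring_nf
    _ ≤ ENNReal.ofReal (C * cmu) := by gcongr

/-- Necessary conditions from boundedness of the commutator: if
`[b,H] : L²(μ) → L²(λ)` is bounded with norm at most `N`, then
`sup_I μ(I)⁻¹ ∫_I |b − ⟨b⟩_I|² λ dx ≤ C N²` for an absolute constant `C`; and
if moreover `μ ∈ A₂`, then also
`sup_I (μ⁻¹(I)/|I|²) ∫_I |b − ⟨b⟩_I|² λ dx ≤ C [μ]_{A₂} N²`. -/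
theorem commutator_necessary_condition :
    ∃ C > (0 : ℝ), ∀ (μ lam b : ℝ → ℝ) (N : ℝ),
      IsWeight μ → IsWeight lam → LocallyIntegrable b volume →
      (∀ f : ℝ → ℝ, NiceF f →
        (∫⁻ x : ℝ, ENNReal.ofReal ((commH b f x) ^ 2 * lam x)) ≤
          ENNReal.ofReal (N ^ 2) * ∫⁻ x : ℝ, ENNReal.ofReal ((f x) ^ 2 * μ x)) →
      ((⨆ (a : ℝ) (c : ℝ) (_ : a < c),
          (ENNReal.ofReal (∫ x in Set.Ioo a c, μ x))⁻¹ *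
            ∫⁻ x in Set.Ioo a c,
              ENNReal.ofReal ((b x - avgI b a c) ^ 2 * lam x)) ≤
          ENNReal.ofReal (C * N ^ 2) ∧
        ∀ cmu : ℝ, IsA2 μ cmu →
          (⨆ (a : ℝ) (c : ℝ) (_ : a < c),
              ENNReal.ofReal ((∫ x in Set.Ioo a c, (μ x)⁻¹) / (c - a) ^ 2) *
                ∫⁻ x in Set.Ioo a c,
                  ENNReal.ofReal ((b x - avgI b a c) ^ 2 * lam x)) ≤
            ENNReal.ofReal (C * cmu * N ^ 2)) := by
  refine ⟨5, by norm_num, fun μ lam b N hμ hlam hb hcomm => ?_⟩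
  have hI : ∀ a c, a < c → ∫⁻ x in Ioo a c, ENNReal.ofReal ((b x - avgI b a c) ^ 2 * lam x) ≤
      ENNReal.ofReal (5 * N ^ 2) * ENNReal.ofReal (∫ x in Ioo a c, μ x) := fun a c hac => by
    rw [ofReal_integral_eq_lintegral_ofReal
      ((hμ.1.integrableOn_isCompact isCompact_Icc).mono_set Ioo_subset_Icc_self)
      (ae_restrict_of_ae (hμ.2.mono fun x hx => hx.le))]
    exact lintegral_sq_sub_avgI_le hcomm hb hlam.1.aestronglyMeasurable.aemeasurable hac
  refine ⟨iSup_le fun a => iSup_le fun c => iSup_le fun hac => ?_,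
    fun cmu hA₂ => iSup_le fun a => iSup_le fun c => iSup_le fun hac => ?_⟩
  · rw [mul_comm, ← div_eq_mul_inv]
    exact ENNReal.div_le_of_le_mul (hI a c hac)
  · rw [mul_right_comm]
    exact ofReal_div_sq_mul_le_of_isA2 hA₂ hac
      (integral_nonneg_of_ae (ae_restrict_of_ae (hμ.2.mono fun x hx => hx.le))) (by positivity)
      (hI a c hac)
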